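/- arXiv:2108.05056 — 7 statements merged into one kernel-verified Lean document; each statement's English description precedes it below -/
import Mathlib

section
/- Let R be a finite commutative ring, G a finite group of order n with a fixed listing g_1,…,g_n, and v ∈ RG. Then Hull(v) = C(v) ∩ C(v)^⊥ is a G-code; that is, Ψ^{-1}(C(v) ∩ C(v)^⊥) is a left ideal of the group ring RG. -/
open MonoidAlgebra Matrix

section Defs

variable {R : Type} [CommRing R] {G : Type} [Group G] {n : ℕ}

/-- The matrix `σ(v)` given a listing `g : Fin n ≃ G`: `σ(v)_{ij} = α_{g_i⁻¹ g_j}`. -/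
def sigmaMat (g : Fin n ≃ G) (v : MonoidAlgebra R G) : Matrix (Fin n) (Fin n) R :=
  fun i j => v.coeff ((g i)⁻¹ * g j)

/-- The code `C(v)`: the row span of `σ(v)`. -/
def codeOf (g : Fin n ≃ G) (v : MonoidAlgebra R G) : Submodule R (Fin n → R) :=
  Submodule.span R (Set.range (sigmaMat g v))

/-- The canonical map `Ψ : RG → Rⁿ`. -/
def Psi (g : Fin n ≃ G) (v : MonoidAlgebra R G) : Fin n → R := fun i => v.coeff (g i)

/-- The canonical involution `v ↦ vᵀ`, sending `Σ αᵢ gᵢ` to `Σ αᵢ gᵢ⁻¹`. -/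
def transposeElt (v : MonoidAlgebra R G) : MonoidAlgebra R G :=
  MonoidAlgebra.ofCoeff (Finsupp.equivMapDomain (Equiv.inv G) v.coeff)

/-- The dual code of a set of vectors w.r.t. the standard inner product. -/
def dualCode {m : ℕ} (C : Set (Fin m → R)) : Submodule R (Fin m → R) where
  carrier := {x | ∀ y ∈ C, ∑ i, x i * y i = 0}
  add_mem' := by
    intro a b ha hb y hy
    have h : ∑ i, (a + b) i * y i = (∑ i, a i * y i) + ∑ i, b i * y i := by
      rw [← Finset.sum_add_distrib]
      simp [add_mul]
    rw [h, ha y hy, hb y hy, add_zero]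
  zero_mem' := by intro y hy; simp
  smul_mem' := by
    intro c x hx y hy
    have h : ∑ i, (c • x) i * y i = c * ∑ i, x i * y i := by
      rw [Finset.mul_sum]
      simp [mul_assoc]
    rw [h, hx y hy, mul_zero]

/-- A set of group-ring elements is a left ideal if it is the underlying set of a
left `RG`-submodule of `RG`. -/
def IsLeftIdeal (S : Set (MonoidAlgebra R G)) : Prop :=
  ∃ I : Submodule (MonoidAlgebra R G) (MonoidAlgebra R G), (I : Set (MonoidAlgebra R G)) = S

/-- The right annihilator of a set in the group ring. -/
def rAnn (S : Set (MonoidAlgebra R G)) : Set (MonoidAlgebra R G) :=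
  {w | ∀ u ∈ S, u * w = 0}

/-- `I(v) = Ψ⁻¹(C(v))` as a set. -/
def Iset (g : Fin n ≃ G) (v : MonoidAlgebra R G) : Set (MonoidAlgebra R G) :=
  Psi g ⁻¹' (codeOf g v : Set (Fin n → R))

end Defs

section Aux

variable {R : Type} [CommRing R] {G : Type} [Group G] {n : ℕ}

/-- The index permutation induced by left translation by `k`. -/
def transPerm (g : Fin n ≃ G) (k : G) : Equiv.Perm (Fin n) :=
  g.trans ((Equiv.mulLeft k⁻¹).trans g.symm)

lemma transPerm_apply (g : Fin n ≃ G) (k : G) (i : Fin n) :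
    transPerm g k i = g.symm (k⁻¹ * g i) := rfl

lemma transPerm_symm (g : Fin n ≃ G) (k : G) :
    (transPerm g k).symm = transPerm g k⁻¹ := by
  ext i
  simp [transPerm, Equiv.mulLeft]

lemma codeOf_trans (g : Fin n ≃ G) (v : MonoidAlgebra R G) (k : G)
    {y : Fin n → R} (hy : y ∈ codeOf g v) :
    (fun i => y (transPerm g k i)) ∈ codeOf g v := by
  have hmap : (fun i => y (transPerm g k i)) = LinearMap.funLeft R R (transPerm g k) y := rfl
  rw [hmap]
  clear hmap
  induction hy using Submodule.span_induction with
  | mem x hx =>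
    obtain ⟨i, rfl⟩ := hx
    apply Submodule.subset_span
    refine ⟨g.symm (k * g i), ?_⟩
    funext j
    simp only [sigmaMat, LinearMap.funLeft_apply, transPerm_apply, Equiv.apply_symm_apply]
    rw [_root_.mul_inv_rev, mul_assoc]
  | zero => simp
  | add x y _ _ hx hy => rw [_root_.map_add]; exact Submodule.add_mem _ hx hy
  | smul c x _ hx => rw [_root_.map_smul]; exact Submodule.smul_mem _ c hx

lemma dual_trans (g : Fin n ≃ G) (v : MonoidAlgebra R G) (k : G)
    {y : Fin n → R} (hy : y ∈ dualCode (codeOf g v : Set (Fin n → R))) :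
    (fun i => y (transPerm g k i)) ∈ dualCode (codeOf g v : Set (Fin n → R)) := by
  intro z hz
  have hsum : ∑ i, y (transPerm g k i) * z i
      = ∑ i, y i * z ((transPerm g k).symm i) := by
    rw [← Equiv.sum_comp (transPerm g k) (fun i => y i * z ((transPerm g k).symm i))]
    simp
  rw [hsum]
  have hz' : (fun i => z ((transPerm g k).symm i)) ∈ codeOf g v := by
    rw [transPerm_symm]
    exact codeOf_trans g v k⁻¹ hz
  exact hy _ hz'

lemma psi_add (g : Fin n ≃ G) (a b : MonoidAlgebra R G) :
    Psi g (a + b) = Psi g a + Psi g b := by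
  funext i
  simp [Psi, MonoidAlgebra]

lemma psi_zero (g : Fin n ≃ G) : Psi (R := R) g 0 = 0 := by
  funext i
  simp [Psi, MonoidAlgebra]

lemma psi_single_mul (g : Fin n ≃ G) (k : G) (r : R) (x : MonoidAlgebra R G) :
    Psi g (MonoidAlgebra.single k r * x) = r • fun i => Psi g x (transPerm g k i) := by
  funext i
  simp [Psi, MonoidAlgebra.single_mul_apply, transPerm_apply]

end Aux


/-- `Hull(v) = C(v) ∩ C(v)^⊥` is a `G`-code, i.e. `Ψ⁻¹(C(v) ∩ C(v)^⊥)` is a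
left ideal of the group ring `RG`. -/
theorem hull_is_G_code (R : Type) [CommRing R] [Fintype R] (G : Type) [Group G] [Fintype G]
    {n : ℕ} (g : Fin n ≃ G) (v : MonoidAlgebra R G) :
    IsLeftIdeal (Psi g ⁻¹'
      ((codeOf g v ⊓ dualCode (codeOf g v : Set (Fin n → R))) : Set (Fin n → R))) := by
  set M : Submodule R (Fin n → R) :=
    codeOf g v ⊓ dualCode (codeOf g v : Set (Fin n → R)) with hM
  set S : Set (MonoidAlgebra R G) := Psi g ⁻¹' (M : Set (Fin n → R)) with hS
  have hmemS : ∀ x : MonoidAlgebra R G, x ∈ S ↔ Psi g x ∈ M := fun x => Iff.rfl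
  -- closure under translation
  have htrans : ∀ (y : Fin n → R), y ∈ M → ∀ k : G, (fun i => y (transPerm g k i)) ∈ M := by
    intro y hy k
    exact ⟨codeOf_trans g v k hy.1, dual_trans g v k hy.2⟩
  -- closure of S under left multiplication
  have hmul : ∀ w x : MonoidAlgebra R G, x ∈ S → w * x ∈ S := by
    intro w x hx
    induction w using MonoidAlgebra.induction with
    | zero =>
      rw [hmemS]
      have : (0 : MonoidAlgebra R G) * x = 0 := zero_mul x
      rw [this, psi_zero]
      exact M.zero_mem
    | single_add k r f _ _ ih =>
      rw [hmemS, add_mul, psi_add]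
      refine M.add_mem ?_ ih
      rw [psi_single_mul]
      exact M.smul_mem r (htrans _ ((hmemS x).mp hx) k)
  refine ⟨{ carrier := S
            add_mem' := ?_
            zero_mem' := ?_
            smul_mem' := ?_ }, rfl⟩
  · intro a b ha hb
    rw [hmemS] at ha hb ⊢
    rw [psi_add]
    exact M.add_mem ha hb
  · rw [hmemS, psi_zero]; exact M.zero_mem
  · intro c x hx
    exact hmul c x hx
end

section
/- Let R be a finite commutative ring, G a finite group of order n with a fixed listing g_1,…,g_n, v ∈ RG, and w ∈ RG. Then w^T ∈ R(I(v)) if and only if Ψ(w) ∈ C(v)^⊥. -/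
open MonoidAlgebra Matrix

section Aux

variable {R : Type} [CommRing R] {G : Type} [Group G] {n : ℕ}

lemma transposeElt_apply (w : MonoidAlgebra R G) (x : G) :
    (transposeElt w).coeff x = w.coeff x⁻¹ := by
  simp [transposeElt, MonoidAlgebra.coeff_ofCoeff, Finsupp.equivMapDomain_apply]

lemma mul_apply_fintype [Fintype G] (u w : MonoidAlgebra R G) (x : G) :
    (u * w).coeff x = ∑ a : G, u.coeff a * w.coeff (a⁻¹ * x) := by
  have hu : u = ∑ a : G, MonoidAlgebra.single a (u.coeff a) := by
    ext b
    rw [MonoidAlgebra.coeff_sum, Finsupp.finset_sum_apply]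
    rw [Finset.sum_eq_single b]
    · simp [MonoidAlgebra.single_apply]
    · intro a _ hab; simp [MonoidAlgebra.single_apply, hab]
    · intro hb; exact absurd (Finset.mem_univ b) hb
  calc (u * w).coeff x = ((∑ a : G, MonoidAlgebra.single a (u.coeff a)) * w).coeff x := by rw [← hu]
    _ = (∑ a : G, MonoidAlgebra.single a (u.coeff a) * w).coeff x := by rw [Finset.sum_mul]
    _ = ∑ a : G, (MonoidAlgebra.single a (u.coeff a) * w).coeff x := by
        rw [MonoidAlgebra.coeff_sum, Finsupp.finset_sum_apply]
    _ = ∑ a : G, u.coeff a * w.coeff (a⁻¹ * x) := by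
        simp [MonoidAlgebra.coeff_single_mul_apply]

lemma code_shift (g : Fin n ≃ G) (v : MonoidAlgebra R G) (h : G)
    {x : Fin n → R} (hx : x ∈ codeOf g v) :
    (fun i => x (g.symm (h * g i))) ∈ codeOf g v := by
  have key : Submodule.map (LinearMap.funLeft R R (fun i => g.symm (h * g i)))
      (codeOf g v) ≤ codeOf g v := by
    rw [codeOf, Submodule.map_span, Submodule.span_le]
    rintro _ ⟨_, ⟨k, rfl⟩, rfl⟩
    apply Submodule.subset_span
    refine ⟨g.symm (h⁻¹ * g k), ?_⟩
    ext i
    simp only [sigmaMat, LinearMap.funLeft_apply, Equiv.apply_symm_apply,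
      _root_.mul_inv_rev, inv_inv, mul_assoc]
  exact key ⟨x, hx, rfl⟩

end Aux

/-- `wᵀ ∈ R(I(v))` if and only if `Ψ(w) ∈ C(v)^⊥`. -/
theorem transpose_mem_rAnn_iff (R : Type) [CommRing R] [Fintype R] (G : Type) [Group G]
    [Fintype G] {n : ℕ} (g : Fin n ≃ G) (v w : MonoidAlgebra R G) :
    transposeElt w ∈ rAnn (Iset g v) ↔
      Psi g w ∈ dualCode (codeOf g v : Set (Fin n → R)) := by
  constructor
  · intro H y hy
    set u : MonoidAlgebra R G := MonoidAlgebra.ofCoeff (Finsupp.equivFunOnFinite.symm (fun a => y (g.symm a))) with hu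
    have hua : ∀ a : G, u.coeff a = y (g.symm a) := fun a => rfl
    have humem : u ∈ Iset g v := by
      show Psi g u ∈ (codeOf g v : Set (Fin n → R))
      have : Psi g u = y := by
        funext i
        show u.coeff (g i) = y i
        rw [hua, Equiv.symm_apply_apply]
      rw [this]; exact hy
    have h0 := H u humem
    have h1 : (u * transposeElt w).coeff 1 = 0 := by rw [h0]; rfl
    rw [mul_apply_fintype] at h1
    have h2 : ∑ a : G, u.coeff a * w.coeff a = 0 := by
      rw [← h1]
      apply Finset.sum_congr rfl
      intro a _
      rw [transposeElt_apply]
      simp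
    calc ∑ i, Psi g w i * y i = ∑ a : G, w.coeff a * u.coeff a := by
          rw [← Equiv.sum_comp g (fun a => w.coeff a * u.coeff a)]
          apply Finset.sum_congr rfl
          intro i _
          simp [Psi, hua]
      _ = ∑ a : G, u.coeff a * w.coeff a := by apply Finset.sum_congr rfl; intro a _; ring
      _ = 0 := h2
  · intro H u humem
    ext x
    rw [mul_apply_fintype]
    have hz : (fun i => Psi g u (g.symm (x * g i))) ∈ (codeOf g v : Set (Fin n → R)) :=
      code_shift g v x humem
    have h3 := H _ hz
    calc ∑ a : G, u.coeff a * (transposeElt w).coeff (a⁻¹ * x)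
        = ∑ i, u.coeff (x * g i) * w.coeff (g i) := by
          rw [← Equiv.sum_comp (g.trans (Equiv.mulLeft x))
            (fun a => u.coeff a * (transposeElt w).coeff (a⁻¹ * x))]
          apply Finset.sum_congr rfl
          intro i _
          simp only [Equiv.trans_apply, Equiv.coe_mulLeft, transposeElt_apply, _root_.mul_inv_rev]
          congr 2
          group
      _ = ∑ i, Psi g w i * (fun i => Psi g u (g.symm (x * g i))) i := by
          apply Finset.sum_congr rfl
          intro i _
          simp [Psi]
          ring
      _ = 0 := h3
end

section
/- Let R be a finite commutative ring, G a finite group of order n with a fixed listing g_1,…,g_n, and v ∈ RG. Then Ψ(H(v)) = Hull(v), where H(v) = I(v) ∩ R(I(v))^T and Hull(v) = C(v) ∩ C(v)^⊥. -/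
open MonoidAlgebra Matrix

section Aux

variable {R : Type} [CommRing R] {G : Type} [Group G] [Fintype G] {n : ℕ}

lemma transposeElt_apply_s3 (v : MonoidAlgebra R G) (h : G) : (transposeElt v).coeff h = v.coeff h⁻¹ := rfl

lemma conv_apply (g : Fin n ≃ G) (v w : MonoidAlgebra R G) (t : G) :
    (v * w).coeff t = ∑ j, v.coeff (t * g j) * w.coeff ((g j)⁻¹) := by
  rw [MonoidAlgebra.coeff_mul_apply_right]
  rw [Finsupp.sum_fintype _ _ (by intro a; simp)]
  refine Fintype.sum_equiv ((g.trans (Equiv.inv G)).symm) _ _ (fun a => ?_)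
  simp

lemma psi_single_mul_s3 (g : Fin n ≃ G) (v : MonoidAlgebra R G) (a : G) :
    Psi g (MonoidAlgebra.single a (1:R) * v) = sigmaMat g v (g.symm a) := by
  funext j
  simp [Psi, sigmaMat, MonoidAlgebra.coeff_single_mul_apply]

lemma psi_injective (g : Fin n ≃ G) : Function.Injective (Psi (R := R) g) := by
  intro u u' h
  ext x
  have := congrFun h (g.symm x)
  simpa [Psi] using this

lemma mem_Iset_iff_exists (g : Fin n ≃ G) (v u : MonoidAlgebra R G) :
    u ∈ Iset g v ↔ ∃ a : MonoidAlgebra R G, a * v = u := by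
  constructor
  · intro hu
    have hx : Psi g u ∈ Submodule.span R (Set.range (sigmaMat g v)) := hu
    obtain ⟨c, hc⟩ := (Submodule.mem_span_range_iff_exists_fun R).1 hx
    refine ⟨∑ i, MonoidAlgebra.single (g i) (c i), psi_injective g ?_⟩
    funext j
    have : Psi g ((∑ i, MonoidAlgebra.single (g i) (c i)) * v) j
        = ∑ i, c i * v.coeff ((g i)⁻¹ * g j) := by
      rw [Psi, Finset.sum_mul]
      rw [MonoidAlgebra.coeff_sum, Finsupp.finset_sum_apply]
      refine Finset.sum_congr rfl (fun i _ => ?_)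
      simp [MonoidAlgebra.coeff_single_mul_apply]
    rw [this]
    have := congrFun hc j
    simpa [sigmaMat] using this
  · rintro ⟨a, rfl⟩
    show Psi g (a * v) ∈ codeOf g v
    have : Psi g (a * v) = ∑ i, a.coeff (g i) • sigmaMat g v i := by
      funext j
      show (a * v).coeff (g j) = _
      rw [conv_apply g a v (g j)]
      rw [Finset.sum_apply]
      refine Fintype.sum_equiv (g.trans ((Equiv.mulLeft (g j)).trans g.symm)) _ _ (fun k => ?_)
      simp [sigmaMat, mul_assoc, smul_eq_mul]
    rw [this]
    exact Submodule.sum_mem _ fun i _ =>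
      Submodule.smul_mem _ _ (Submodule.subset_span (Set.mem_range_self i))

lemma v_mem_Iset (g : Fin n ≃ G) (v : MonoidAlgebra R G) : v ∈ Iset g v :=
  (mem_Iset_iff_exists g v v).2 ⟨1, one_mul v⟩

end Aux

/-- `Ψ(H(v)) = Hull(v)`, where `H(v) = I(v) ∩ R(I(v))ᵀ` and
`Hull(v) = C(v) ∩ C(v)^⊥`. -/
theorem psi_image_H_eq_hull (R : Type) [CommRing R] [Fintype R] (G : Type) [Group G]
    [Fintype G] {n : ℕ} (g : Fin n ≃ G) (v : MonoidAlgebra R G) :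
    Psi g '' (Iset g v ∩ (transposeElt '' rAnn (Iset g v))) =
      ((codeOf g v ⊓ dualCode (codeOf g v : Set (Fin n → R))) : Set (Fin n → R)) := by
  ext x
  constructor
  · rintro ⟨u, ⟨huI, w, hw, rfl⟩, rfl⟩
    have hvw : v * w = 0 := hw v (v_mem_Iset g v)
    refine ⟨huI, ?_⟩
    intro y hy
    induction hy using Submodule.span_induction with
    | mem y hy =>
      obtain ⟨i, rfl⟩ := hy
      have : ∑ j, Psi g (transposeElt w) j * sigmaMat g v i j = (v * w).coeff ((g i)⁻¹) := by
        rw [conv_apply g v w ((g i)⁻¹)]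
        refine Finset.sum_congr rfl (fun j _ => ?_)
        simp [Psi, transposeElt_apply_s3, sigmaMat, mul_comm]
      rw [this, hvw]; rfl
    | zero => simp
    | add y z _ _ hy hz =>
      have : ∑ j, Psi g (transposeElt w) j * (y + z) j
          = (∑ j, Psi g (transposeElt w) j * y j) + ∑ j, Psi g (transposeElt w) j * z j := by
        rw [← Finset.sum_add_distrib]; simp [mul_add]
      rw [this, hy, hz, add_zero]
    | smul c y _ hy =>
      have : ∑ j, Psi g (transposeElt w) j * (c • y) j
          = c * ∑ j, Psi g (transposeElt w) j * y j := by
        rw [Finset.mul_sum]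
        refine Finset.sum_congr rfl (fun j _ => ?_)
        simp; ring
      rw [this, hy, mul_zero]
  · rintro ⟨hxC, hxD⟩
    set u : MonoidAlgebra R G := MonoidAlgebra.ofCoeff (Finsupp.equivFunOnFinite.symm (fun h => x (g.symm h))) with hu
    have hPsi : Psi g u = x := by funext i; simp [Psi, hu]
    have hvw : v * transposeElt u = 0 := by
      ext t
      rw [conv_apply g v (transposeElt u) t]
      have : ∑ j, v.coeff (t * g j) * (transposeElt u).coeff ((g j)⁻¹)
          = ∑ j, x j * sigmaMat g v (g.symm t⁻¹) j := by
        refine Finset.sum_congr rfl (fun j _ => ?_)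
        simp [transposeElt_apply_s3, sigmaMat, hu, mul_comm]
      rw [this, hxD _ (Submodule.subset_span (Set.mem_range_self _))]
      rfl
    refine ⟨u, ⟨?_, transposeElt u, ?_, ?_⟩, hPsi⟩
    · show Psi g u ∈ codeOf g v
      rw [hPsi]; exact hxC
    · intro u' hu'
      obtain ⟨a, rfl⟩ := (mem_Iset_iff_exists g v u').1 hu'
      rw [mul_assoc, hvw, mul_zero]
    · ext h
      simp [transposeElt, Finsupp.equivMapDomain]
end

section
/- Let R_1 = F_2[u]/(u^2) be the ring of dual numbers over the field F_2 with two elements, and let φ : R_1^n → F_2^{2n} be the coordinatewise extension of the Gray map φ(a + bu) = (b, a + b). If C ⊆ R_1^n is a linear code that is reversible of index 1 (i.e., (c_1, …, c_n) ∈ C implies (c_n, …, c_1) ∈ C), then φ(C) is reversible of index 2: if (a_1, a_2, …, a_{2n-1}, a_{2n}) ∈ φ(C), where consecutive pairs (a_{2i-1}, a_{2i}) form n blocks of length 2, then the vector obtained by reversing the order of these n blocks, (a_{2n-1}, a_{2n}, …, a_1, a_2), also lies in φ(C). -/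
open MonoidAlgebra Matrix

/-- The Gray map `φ₁ : R₁ → 𝔽₂²`, `φ₁(a + bu) = (b, a + b)`. -/
def gray1 (x : DualNumber (ZMod 2)) : Fin 2 → ZMod 2 := ![x.snd, x.fst + x.snd]

/-- The coordinatewise extension `φ : R₁ⁿ → 𝔽₂^{2n}` of the Gray map. -/
def gray (n : ℕ) (c : Fin n → DualNumber (ZMod 2)) : Fin (2 * n) → ZMod 2 :=
  fun k => gray1 (c ⟨k.val / 2, by have := k.isLt; omega⟩) ⟨k.val % 2, by omega⟩

/-- Reverse the order of the `n` consecutive blocks of length 2 of a vector in `𝔽₂^{2n}`. -/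
def blockRev (n : ℕ) (a : Fin (2 * n) → ZMod 2) : Fin (2 * n) → ZMod 2 :=
  fun k => a ⟨2 * (n - 1 - k.val / 2) + k.val % 2, by have := k.isLt; omega⟩

/-- if a linear code `C ⊆ R₁ⁿ` is reversible of index 1, then its Gray image
`φ(C)` is reversible of index 2 (reversing the `n` blocks of length 2). -/
theorem gray_image_reversible (n : ℕ)
    (C : Submodule (DualNumber (ZMod 2)) (Fin n → DualNumber (ZMod 2)))
    (hrev : ∀ c ∈ C, (fun i => c i.rev) ∈ C) :
    ∀ a ∈ gray n '' (C : Set (Fin n → DualNumber (ZMod 2))),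
      blockRev n a ∈ gray n '' (C : Set (Fin n → DualNumber (ZMod 2))) := by
  rintro a ⟨c, hc, rfl⟩
  refine ⟨fun i => c i.rev, hrev c hc, ?_⟩
  funext k
  have hk := k.isLt
  simp only [blockRev, gray]
  congr 1
  · congr 1
    apply Fin.ext
    simp [Fin.val_rev]
    omega
  · apply Fin.ext
    simp
end

section
/- Let R_1 = F_2[u]/(u^2) be the ring of dual numbers over the field F_2 with two elements, and let φ : R_1^n → F_2^{2n} be the coordinatewise extension of the Gray map φ(a + bu) = (b, a + b). If C ⊆ R_1^n is a linear code with C ∩ C^⊥ = {0}, then the binary linear code φ(C) ⊆ F_2^{2n} satisfies φ(C) ∩ φ(C)^⊥ = {0}; that is, the Gray image of an LCD code over R_1 is a binary LCD code of length 2n. -/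
open MonoidAlgebra Matrix

lemma gray1_add (x y : DualNumber (ZMod 2)) : gray1 (x + y) = gray1 x + gray1 y := by
  funext i; fin_cases i <;> simp [gray1] <;> ring

lemma gray1_zero : gray1 0 = 0 := by
  funext i; fin_cases i <;> simp [gray1]

lemma gray_add (n : ℕ) (x y : Fin n → DualNumber (ZMod 2)) :
    gray n (x + y) = gray n x + gray n y := by
  funext k; simp [gray, gray1_add]

lemma gray_zero (n : ℕ) : gray n 0 = 0 := by
  funext k; simp [gray, gray1_zero]

def pairEquiv (n : ℕ) : Fin (2 * n) ≃ Fin n × Fin 2 where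
  toFun k := (⟨k / 2, by have := k.isLt; omega⟩, ⟨k % 2, by omega⟩)
  invFun p := ⟨2 * p.1 + p.2, by have := p.1.isLt; have := p.2.isLt; omega⟩
  left_inv k := by ext; simp; omega
  right_inv p := by
    have := p.2.isLt
    ext <;> simp <;> omega

lemma gray_apply (n : ℕ) (x : Fin n → DualNumber (ZMod 2)) (i : Fin n) (j : Fin 2) :
    gray n x ((pairEquiv n).symm (i, j)) = gray1 (x i) j := by
  have hj := j.isLt
  unfold gray
  congr 1
  · congr 1; ext; simp [pairEquiv]; omega
  · ext; simp [pairEquiv]; omega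

lemma key : ∀ a1 a2 b1 b2 : ZMod 2,
    a2 * b2 + (a1 + a2) * (b1 + b2) = a1 * b1 + (a1 * b2 + b1 * a2) := by decide

lemma gray1_inner (a b : DualNumber (ZMod 2)) :
    gray1 a 0 * gray1 b 0 + gray1 a 1 * gray1 b 1 = (a * b).fst + (a * b).snd := by
  simp [gray1, TrivSqZeroExt.fst_mul, TrivSqZeroExt.snd_mul, smul_eq_mul, mul_comm]
  exact key a.fst a.snd b.fst b.snd

lemma gray_inner (n : ℕ) (x y : Fin n → DualNumber (ZMod 2)) :
    ∑ k, gray n x k * gray n y k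
      = (∑ i, x i * y i).fst + (∑ i, x i * y i).snd := by
  rw [← Equiv.sum_comp (pairEquiv n).symm (fun k => gray n x k * gray n y k)]
  rw [Fintype.sum_prod_type]
  have h : ∀ i : Fin n, ∑ j : Fin 2,
      gray n x ((pairEquiv n).symm (i, j)) * gray n y ((pairEquiv n).symm (i, j))
      = (x i * y i).fst + (x i * y i).snd := by
    intro i
    rw [Fin.sum_univ_two, gray_apply, gray_apply, gray_apply, gray_apply]
    exact gray1_inner _ _
  rw [Finset.sum_congr rfl (fun i _ => h i), Finset.sum_add_distrib,
    TrivSqZeroExt.fst_sum, TrivSqZeroExt.snd_sum]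

lemma eps_mul_fst (s : DualNumber (ZMod 2)) : ((DualNumber.eps : DualNumber (ZMod 2)) * s).fst = 0 := by
  simp [TrivSqZeroExt.fst_mul]

lemma eps_mul_snd (s : DualNumber (ZMod 2)) : ((DualNumber.eps : DualNumber (ZMod 2)) * s).snd = s.fst := by
  simp [TrivSqZeroExt.snd_mul]

set_option synthInstance.maxHeartbeats 1000000 in
/-- the Gray image of an LCD code over `R₁ = 𝔽₂[u]/(u²)` is a binary
linear LCD code of length `2n`. -/
theorem gray_image_lcd (n : ℕ)
    (C : Submodule (DualNumber (ZMod 2)) (Fin n → DualNumber (ZMod 2)))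
    (hlcd : C ⊓ dualCode (C : Set (Fin n → DualNumber (ZMod 2))) = ⊥) :
    (∃ D : Submodule (ZMod 2) (Fin (2 * n) → ZMod 2),
      (D : Set (Fin (2 * n) → ZMod 2)) = gray n '' (C : Set (Fin n → DualNumber (ZMod 2)))) ∧
    (gray n '' (C : Set (Fin n → DualNumber (ZMod 2)))) ∩
        (dualCode (gray n '' (C : Set (Fin n → DualNumber (ZMod 2)))) :
          Set (Fin (2 * n) → ZMod 2)) = {0} := by
  
  constructor
  · refine ⟨{ carrier := gray n '' (C : Set (Fin n → DualNumber (ZMod 2)))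
              add_mem' := ?_
              zero_mem' := ⟨0, C.zero_mem, gray_zero n⟩
              smul_mem' := ?_ }, rfl⟩
    · intro a b ha hb
      obtain ⟨x, hx, rfl⟩ := ha
      obtain ⟨y, hy, rfl⟩ := hb
      exact ⟨x + y, C.add_mem hx hy, gray_add n x y⟩
    · intro c a ha
      rcases (by decide : ∀ c : ZMod 2, c = 0 ∨ c = 1) c with rfl | rfl
      · exact ⟨0, C.zero_mem, by rw [gray_zero]; simp⟩
      · simpa using ha
  · ext z
    simp only [Set.mem_inter_iff, Set.mem_singleton_iff]
    constructor
    · rintro ⟨⟨x, hx, rfl⟩, hz⟩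
      have hz' : ∀ w ∈ gray n '' (C : Set (Fin n → DualNumber (ZMod 2))),
          ∑ i, gray n x i * w i = 0 := hz
      have hxdual : x ∈ dualCode (C : Set (Fin n → DualNumber (ZMod 2))) := by
        intro y hy
        have h1 := hz' (gray n y) ⟨y, hy, rfl⟩
        have h2 := hz' (gray n (((DualNumber.eps : DualNumber (ZMod 2)) • y : Fin n → DualNumber (ZMod 2)))) ⟨_, C.smul_mem _ hy, rfl⟩
        rw [gray_inner] at h1 h2
        have he : ∑ i, x i * (((DualNumber.eps : DualNumber (ZMod 2)) • y : Fin n → DualNumber (ZMod 2))) i = (DualNumber.eps : DualNumber (ZMod 2)) * ∑ i, x i * y i := by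
          rw [Finset.mul_sum]
          refine Finset.sum_congr rfl fun i _ => ?_
          simp only [Pi.smul_apply, smul_eq_mul]; ring
        rw [he, eps_mul_fst, eps_mul_snd, zero_add] at h2
        have hsnd : (∑ i, x i * y i).snd = 0 := by rwa [h2, zero_add] at h1
        exact TrivSqZeroExt.ext h2 hsnd
      have hx0 : x = 0 := by
        have hmem : x ∈ C ⊓ dualCode (C : Set (Fin n → DualNumber (ZMod 2))) := ⟨hx, hxdual⟩
        rw [hlcd] at hmem
        simpa using hmem
      rw [hx0, gray_zero]
    · rintro rfl
      exact ⟨⟨0, C.zero_mem, gray_zero n⟩, fun y hy => by simp⟩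
end

section
/- Let R be a finite commutative ring, G a finite group of order n with a fixed listing g_1,…,g_n, and v ∈ RG. Then Ψ^{-1}(C(v)) equals the left ideal of RG generated by v, i.e., the R-span of {g v : g ∈ G}; in particular Ψ^{-1}(C(v)) is a left ideal of RG, so C(v) is a G-code. -/
open MonoidAlgebra Matrix

section Aux

variable {R : Type} [CommRing R] {G : Type} [Group G] {n : ℕ}

/-- `Ψ` as an `R`-linear map. -/
def PsiL (g : Fin n ≃ G) : MonoidAlgebra R G →ₗ[R] (Fin n → R) where
  toFun v := fun i => v.coeff (g i)
  map_add' x y := by ext i; exact Finsupp.add_apply x.coeff y.coeff (g i)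
  map_smul' c x := by
    ext i
    show (c • x).coeff (g i) = c • x.coeff (g i)
    exact Finsupp.smul_apply c x.coeff (g i)

lemma PsiL_inj (g : Fin n ≃ G) : Function.Injective (PsiL (R := R) g) := by
  intro x y h
  ext a
  have := congrFun h (g.symm a)
  simpa [PsiL] using this

lemma sigma_row (g : Fin n ≃ G) (v : MonoidAlgebra R G) :
    sigmaMat g v = (PsiL g) ∘ fun i : Fin n => (MonoidAlgebra.of R G (g i)) * v := by
  funext i j
  simp [sigmaMat, PsiL, MonoidAlgebra.of_apply, MonoidAlgebra.single_mul_apply]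

lemma preimage_eq_span (g : Fin n ≃ G) (v : MonoidAlgebra R G) :
    Psi g ⁻¹' (codeOf g v : Set (Fin n → R)) =
      (Submodule.span R (Set.range fun h : G => (MonoidAlgebra.of R G h) * v) :
        Set (MonoidAlgebra R G)) := by
  have hrange : (Set.range fun i : Fin n => (MonoidAlgebra.of R G (g i)) * v) =
      Set.range fun h : G => (MonoidAlgebra.of R G h) * v := by
    exact g.surjective.range_comp fun h : G => (MonoidAlgebra.of R G h) * v
  have hmap : codeOf g v = Submodule.map (PsiL g)
      (Submodule.span R (Set.range fun h : G => (MonoidAlgebra.of R G h) * v)) := by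
    rw [codeOf, Submodule.map_span, ← hrange, ← Set.range_comp, ← sigma_row]
  have : Psi g ⁻¹' (codeOf g v : Set (Fin n → R)) =
      (Submodule.comap (PsiL g) (codeOf g v) : Set (MonoidAlgebra R G)) := rfl
  rw [this, hmap, Submodule.comap_map_eq_of_injective (PsiL_inj g)]

lemma span_eq_ideal (v : MonoidAlgebra R G) :
    ((Submodule.span (MonoidAlgebra R G) {v} : Submodule (MonoidAlgebra R G)
        (MonoidAlgebra R G)) : Set (MonoidAlgebra R G)) =
      (Submodule.span R (Set.range fun h : G => (MonoidAlgebra.of R G h) * v) :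
        Set (MonoidAlgebra R G)) := by
  apply Set.Subset.antisymm
  · intro x hx
    rw [SetLike.mem_coe, Submodule.mem_span_singleton] at hx
    obtain ⟨w, rfl⟩ := hx
    have hw : w • v = w.coeff.sum fun a c => c • ((MonoidAlgebra.of R G a) * v) := by
      rw [smul_eq_mul]
      conv_lhs => rw [← MonoidAlgebra.sum_coeff_single w]
      rw [Finsupp.sum, Finsupp.sum, Finset.sum_mul]
      refine Finset.sum_congr rfl fun a _ => ?_
      rw [MonoidAlgebra.of_apply]
      conv_rhs => rw [← smul_mul_assoc, MonoidAlgebra.smul_single', mul_one]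
    rw [hw]
    exact Submodule.sum_mem _ fun a _ => Submodule.smul_mem _ _
      (Submodule.subset_span (Set.mem_range_self a))
  · intro x hx
    have hle : Submodule.span R (Set.range fun h : G => (MonoidAlgebra.of R G h) * v) ≤
        Submodule.restrictScalars R (Submodule.span (MonoidAlgebra R G) {v}) := by
      apply Submodule.span_le.mpr
      rintro _ ⟨h, rfl⟩
      exact Submodule.smul_mem _ _ (Submodule.mem_span_singleton_self v)
    exact hle hx

end Aux


/-- `Ψ⁻¹(C(v))` equals the left ideal of `RG` generated by `v`, namely the
`R`-span of `{g v : g ∈ G}`; in particular it is a left ideal, so `C(v)` is a `G`-code. -/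
theorem psi_preimage_code_eq_left_ideal (R : Type) [CommRing R] [Fintype R] (G : Type)
    [Group G] [Fintype G] {n : ℕ} (g : Fin n ≃ G) (v : MonoidAlgebra R G) :
    Psi g ⁻¹' (codeOf g v : Set (Fin n → R)) =
      (Submodule.span R (Set.range fun h : G => (MonoidAlgebra.of R G h) * v) :
        Set (MonoidAlgebra R G)) ∧
    IsLeftIdeal (Psi g ⁻¹' (codeOf g v : Set (Fin n → R))) := by
  refine ⟨preimage_eq_span g v, Submodule.span (MonoidAlgebra R G) {v}, ?_⟩
  rw [preimage_eq_span g v, span_eq_ideal v]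
end

section
/- Let F be a field and let M be a k × n matrix over F whose rows are linearly independent, generating the linear code C ⊆ F^n (the row span of M). Then C is an LCD code, i.e., C ∩ C^⊥ = {0}, if and only if det(M M^T) ≠ 0. In particular, if M M^T = I_k then C is an LCD code. -/
open MonoidAlgebra Matrix

/-- for a `k × n` matrix `M` over a field with linearly independent rows
generating the code `C` (the row span of `M`), `C` is LCD iff `det(M Mᵀ) ≠ 0`;
in particular if `M Mᵀ = I` then `C` is LCD. -/
theorem lcd_iff_det_ne_zero (F : Type) [Field F] (k n : ℕ) (M : Matrix (Fin k) (Fin n) F)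
    (hM : LinearIndependent F (fun i : Fin k => M i)) :
    ((Submodule.span F (Set.range fun i : Fin k => M i) ⊓
        dualCode ((Submodule.span F (Set.range fun i : Fin k => M i) :
          Submodule F (Fin n → F)) : Set (Fin n → F)) = ⊥) ↔
      (M * Mᵀ).det ≠ 0) ∧
    (M * Mᵀ = 1 →
      Submodule.span F (Set.range fun i : Fin k => M i) ⊓
        dualCode ((Submodule.span F (Set.range fun i : Fin k => M i) :
          Submodule F (Fin n → F)) : Set (Fin n → F)) = ⊥) := by
  set C : Submodule F (Fin n → F) :=
    Submodule.span F (Set.range fun i : Fin k => M i) with hCdef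
  -- membership in C
  have hmem : ∀ x : Fin n → F, x ∈ C ↔ ∃ c : Fin k → F, x = Matrix.vecMul c M := by
    intro x
    rw [hCdef, Finsupp.mem_span_range_iff_exists_finsupp]
    constructor
    · rintro ⟨c, hc⟩
      refine ⟨c, ?_⟩
      rw [← hc]
      funext j
      rw [Finsupp.sum_fintype _ _ (by simp)]
      simp [Matrix.vecMul, dotProduct]
    · rintro ⟨c, hc⟩
      refine ⟨Finsupp.equivFunOnFinite.symm c, ?_⟩
      rw [hc]
      funext j
      rw [Finsupp.sum_fintype _ _ (by simp)]
      simp [Matrix.vecMul, dotProduct]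
  -- dual condition
  have hdual : ∀ x : Fin n → F, x ∈ dualCode (C : Set (Fin n → F)) ↔ M.mulVec x = 0 := by
    intro x
    constructor
    · intro h
      funext j
      have := h (M j) (Submodule.subset_span ⟨j, rfl⟩)
      simpa [Matrix.mulVec, dotProduct, mul_comm] using this
    · intro h y hy
      let φ : (Fin n → F) →ₗ[F] F :=
        { toFun := fun y => ∑ i, x i * y i
          map_add' := by intro a b; simp [mul_add, Finset.sum_add_distrib]
          map_smul' := by intro c a; simp [Finset.mul_sum, mul_left_comm] }
      have hker : C ≤ LinearMap.ker φ := by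
        rw [hCdef, Submodule.span_le]
        rintro _ ⟨j, rfl⟩
        have : M.mulVec x j = 0 := by rw [h]; rfl
        simpa [φ, Matrix.mulVec, dotProduct, mul_comm] using this
      exact hker hy
  have hx_ne : ∀ c : Fin k → F, c ≠ 0 → Matrix.vecMul c M ≠ 0 := by
    intro c hc h0
    apply hc
    have hli := Fintype.linearIndependent_iff.mp hM c
    have : ∑ i, c i • M i = 0 := by
      rw [← h0]; funext j
      simp [Matrix.vecMul, dotProduct]
    funext i; exact hli this i
  have key : ∀ c : Fin k → F, M.mulVec (Matrix.vecMul c M) = (M * Mᵀ).mulVec c := by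
    intro c
    rw [← Matrix.mulVec_transpose, Matrix.mulVec_mulVec]
  have main : (C ⊓ dualCode (C : Set (Fin n → F)) = ⊥) ↔ (M * Mᵀ).det ≠ 0 := by
    constructor
    · intro h hdet
      obtain ⟨c, hc, hc0⟩ := (Matrix.exists_mulVec_eq_zero_iff).mpr hdet
      have hxC : Matrix.vecMul c M ∈ C := (hmem _).mpr ⟨c, rfl⟩
      have hxD : Matrix.vecMul c M ∈ dualCode (C : Set (Fin n → F)) := by
        rw [hdual, key, hc0]
      have : Matrix.vecMul c M ∈ C ⊓ dualCode (C : Set (Fin n → F)) := ⟨hxC, hxD⟩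
      rw [h, Submodule.mem_bot] at this
      exact hx_ne c hc this
    · intro hdet
      rw [eq_bot_iff]
      rintro x ⟨hxC, hxD⟩
      obtain ⟨c, rfl⟩ := (hmem x).mp hxC
      have hxD' := (hdual _).mp hxD
      rw [key] at hxD'
      have hc : c = 0 := by
        by_contra hc
        exact hdet (Matrix.exists_mulVec_eq_zero_iff.mp ⟨c, hc, hxD'⟩)
      rw [Submodule.mem_bot, hc]
      funext j; simp [Matrix.vecMul, dotProduct]
  refine ⟨main, fun h => main.mpr ?_⟩
  rw [h, Matrix.det_one]
  exact one_ne_zero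
end
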